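/- (Kantorovich theorem, convergence rate.) Assume additionally h < 1/2 and set θ = (1 − √(1 − 2h))/(1 + √(1 − 2h)) ∈ (0, 1). Let x* be the zero of F in the closed ball of center x₀ and radius t* = ((1 − √(1 − 2h))/h)·η to which the Newton sequence x_{k+1} = x_k − F'(x_k)⁻¹ F(x_k) converges. Then for every k ≥ 0, ‖x* − x_{k+1}‖ ≤ (θ^{2^{k+1}} (1 − θ²)) / (θ (1 − θ^{2^{k+1}})) · η. -/

import Mathlib

/-!
Kantorovich's majorant argument. Replacing `F` by `A⁻¹ ∘ F` we may assume `F' x₀ = 1`, with `F'`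
Lipschitz of constant `a = B K`. Let `t n` be the Newton iterates from `0` of the scalar quadratic
`f τ = a / 2 * τ ^ 2 - τ + η`. Inductively `‖x n - x₀‖ ≤ t n` and `‖F (x n)‖ ≤ f (t n)`: the Banach
lemma bounds the Newton step by `f (t n) / (1 - a * t n) = t (n + 1) - t n`, and the second-order
Taylor bound gives `‖F (x (n + 1))‖ ≤ a / 2 * (t (n + 1) - t n) ^ 2 = f (t (n + 1))`. Telescoping,
`‖x* - x n‖ ≤ t* - t n` where `t*` is the smaller root of `f`.
-/

open Set Filter Topology Metric

section NormedSpace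

variable {X Y : Type*} [NormedAddCommGroup X] [NormedSpace ℝ X]
  [NormedAddCommGroup Y] [NormedSpace ℝ Y]

theorem Convex.norm_image_sub_sub_fderiv_le {s : Set X} (hs : Convex ℝ s) {f : X → Y}
    {f' : X → X →L[ℝ] Y} (hf : ∀ z ∈ s, HasFDerivAt f (f' z) z) {L : ℝ}
    (hLip : ∀ u ∈ s, ∀ v ∈ s, ‖f' u - f' v‖ ≤ L * ‖u - v‖) {x y : X} (hx : x ∈ s)
    (hy : y ∈ s) : ‖f y - f x - f' x (y - x)‖ ≤ L / 2 * ‖y - x‖ ^ 2 := by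
  set d := y - x
  have hmem : ∀ t ∈ Icc (0 : ℝ) 1, x + t • d ∈ s := fun t ht => hs.add_smul_sub_mem hx hy ht
  -- `g` has derivative `(f' (x + t • d) - f' x) d`, of norm at most `L * ‖d‖ ^ 2 * t`.
  set g : ℝ → Y := fun t => f (x + t • d) - f x - t • f' x d
  have hg : ∀ t ∈ Icc (0 : ℝ) 1, HasDerivAt g (f' (x + t • d) d - f' x d) t := by
    intro t ht
    have hline : HasDerivAt (fun t : ℝ => x + t • d) d t := by
      simpa using ((hasDerivAt_id t).smul_const d).const_add x
    exact (((hf _ (hmem t ht)).comp_hasDerivAt t hline).sub_const (f x)).sub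
      (by simpa using (hasDerivAt_id t).smul_const (f' x d))
  have hbound (t : ℝ) :
      HasDerivAt (fun t : ℝ => L / 2 * ‖d‖ ^ 2 * t ^ 2) (L * ‖d‖ ^ 2 * t) t :=
    ((hasDerivAt_pow 2 t).const_mul (L / 2 * ‖d‖ ^ 2)).congr_deriv (by push_cast; ring)
  have key := image_norm_le_of_norm_deriv_right_le_deriv_boundary
    (fun t ht => (hg t ht).continuousAt.continuousWithinAt)
    (fun t ht => (hg t (Ico_subset_Icc_self ht)).hasDerivWithinAt)
    (by simp [g]) hbound (fun t ht => ?_) (right_mem_Icc.2 zero_le_one)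
  · simpa [g, d] using key
  · have ht' := Ico_subset_Icc_self ht
    calc ‖f' (x + t • d) d - f' x d‖ = ‖(f' (x + t • d) - f' x) d‖ := rfl
      _ ≤ ‖f' (x + t • d) - f' x‖ * ‖d‖ := ContinuousLinearMap.le_opNorm _ _
      _ ≤ L * ‖x + t • d - x‖ * ‖d‖ := by gcongr; exact hLip _ (hmem t ht') _ hx
      _ = L * ‖d‖ ^ 2 * t := by
        rw [add_sub_cancel_left, norm_smul, Real.norm_of_nonneg ht.1]; ring

theorem ContinuousLinearMap.norm_comp_sub_comp_le (T : Y →L[ℝ] X) (L M : X →L[ℝ] Y) :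
    ‖T.comp L - T.comp M‖ ≤ ‖T‖ * ‖L - M‖ := by
  rw [← ContinuousLinearMap.comp_sub]
  exact T.opNorm_comp_le _

theorem ContinuousLinearEquiv.norm_symm_le_of_norm_id_sub_le (E : X ≃L[ℝ] X) {c : ℝ} (hc : c < 1)
    (hE : ‖ContinuousLinearMap.id ℝ X - (E : X →L[ℝ] X)‖ ≤ c) :
    ‖(E.symm : X →L[ℝ] X)‖ ≤ (1 - c)⁻¹ := by
  set S : X →L[ℝ] X := (E.symm : X →L[ℝ] X) with hSdef
  set T := ContinuousLinearMap.id ℝ X - (E : X →L[ℝ] X)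
  have hS : S = ContinuousLinearMap.id ℝ X + S.comp T := by
    ext v; simp [hSdef, T]
  have : ‖S‖ ≤ 1 + ‖S‖ * c :=
    calc ‖S‖ ≤ ‖ContinuousLinearMap.id ℝ X‖ + ‖S‖ * ‖T‖ := by
          nth_rw 1 [hS]; exact norm_add_le_of_le le_rfl (S.opNorm_comp_le T)
      _ ≤ 1 + ‖S‖ * c := by gcongr; exact ContinuousLinearMap.norm_id_le
  rw [← one_div, le_div_iff₀ (by linarith)]
  linarith

end NormedSpace

theorem dist_le_of_tendsto_of_dist_succ_le {α : Type*} [PseudoMetricSpace α] {x : ℕ → α}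
    {y : α} {t : ℕ → ℝ} {R : ℝ} (hx : ∀ n, dist (x n) (x (n + 1)) ≤ t (n + 1) - t n)
    (ht : ∀ n, t n ≤ R) (hlim : Tendsto x atTop (𝓝 y)) (n : ℕ) :
    dist (x n) y ≤ R - t n := by
  have hpartial (m : ℕ) : dist (x n) (x (n + m)) ≤ t (n + m) - t n := by
    induction m with
    | zero => simp
    | succ m ih =>
      calc dist (x n) (x (n + (m + 1)))
          ≤ dist (x n) (x (n + m)) + dist (x (n + m)) (x (n + m + 1)) := dist_triangle _ _ _
        _ ≤ t (n + (m + 1)) - t n := by rw [← add_assoc]; linarith [hx (n + m)]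
  refine le_of_tendsto (tendsto_const_nhds.dist (hlim.comp (tendsto_add_atTop_nat n)))
    (Eventually.of_forall fun m => ?_)
  simpa [add_comm m n] using (hpartial m).trans (by linarith [ht (n + m)])

section NewtonMajorant

variable {X : Type*} [NormedAddCommGroup X] [NormedSpace ℝ X] {D : Set X} {G : X → X}
  {G' : X → X →L[ℝ] X} {a : ℝ}

theorem norm_newton_step_le (hLip : ∀ u ∈ D, ∀ v ∈ D, ‖G' u - G' v‖ ≤ a * ‖u - v‖)
    {x₀ x : X} (hx₀ : x₀ ∈ D) (hx : x ∈ D) (hG'x₀ : G' x₀ = ContinuousLinearMap.id ℝ X)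
    (hax : a * ‖x - x₀‖ < 1) (E : X ≃L[ℝ] X) (hE : (E : X →L[ℝ] X) = G' x) :
    ‖E.symm (G x)‖ ≤ ‖G x‖ / (1 - a * ‖x - x₀‖) := by
  have hEinv : ‖(E.symm : X →L[ℝ] X)‖ ≤ (1 - a * ‖x - x₀‖)⁻¹ := by
    refine E.norm_symm_le_of_norm_id_sub_le hax ?_
    rw [hE, ← hG'x₀, norm_sub_rev x]
    exact hLip x₀ hx₀ x hx
  calc ‖E.symm (G x)‖ ≤ ‖(E.symm : X →L[ℝ] X)‖ * ‖G x‖ := (E.symm : X →L[ℝ] X).le_opNorm _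
    _ ≤ (1 - a * ‖x - x₀‖)⁻¹ * ‖G x‖ := by gcongr
    _ = ‖G x‖ / (1 - a * ‖x - x₀‖) := inv_mul_eq_div _ _

theorem norm_image_newton_step_le (hD : Convex ℝ D) (hG : ∀ z ∈ D, HasFDerivAt G (G' z) z)
    (hLip : ∀ u ∈ D, ∀ v ∈ D, ‖G' u - G' v‖ ≤ a * ‖u - v‖) {x : X} (hx : x ∈ D)
    (E : X ≃L[ℝ] X) (hE : (E : X →L[ℝ] X) = G' x) (hx' : x - E.symm (G x) ∈ D) :
    ‖G (x - E.symm (G x))‖ ≤ a / 2 * ‖E.symm (G x)‖ ^ 2 := by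
  have hlin : G x + G' x (x - E.symm (G x) - x) = 0 := by
    rw [← hE]; simp
  have := hD.norm_image_sub_sub_fderiv_le hG hLip hx hx'
  rwa [sub_sub, hlin, sub_zero, sub_sub_cancel_left, norm_neg] at this

theorem newton_dist_succ_le_of_majorant (hD : Convex ℝ D)
    (hG : ∀ z ∈ D, HasFDerivAt G (G' z) z) (ha : 0 ≤ a)
    (hLip : ∀ u ∈ D, ∀ v ∈ D, ‖G' u - G' v‖ ≤ a * ‖u - v‖) {x : ℕ → X}
    (hNewton : ∀ n, ∃ E : X ≃L[ℝ] X, (E : X →L[ℝ] X) = G' (x n) ∧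
      x (n + 1) = x n - E.symm (G (x n)))
    (hG'0 : G' (x 0) = ContinuousLinearMap.id ℝ X) {η R : ℝ} (hη : ‖G (x 0)‖ ≤ η)
    (hR : a * R < 1) (hball : closedBall (x 0) R ⊆ D) {t : ℕ → ℝ} (ht0 : t 0 = 0)
    (htR : ∀ n, t n ≤ R)
    (ht : ∀ n, (t (n + 1) - t n) * (1 - a * t n) = a / 2 * t n ^ 2 - t n + η) (n : ℕ) :
    dist (x n) (x (n + 1)) ≤ t (n + 1) - t n := by
  have hmem {z : X} {τ : ℝ} (hz : ‖z - x 0‖ ≤ τ) (hτ : τ ≤ R) : z ∈ D :=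
    hball (mem_closedBall_iff_norm.2 (hz.trans hτ))
  have step (k : ℕ) (hxk : ‖x k - x 0‖ ≤ t k) (hGk : ‖G (x k)‖ ≤ a / 2 * t k ^ 2 - t k + η) :
      ‖x (k + 1) - x k‖ ≤ t (k + 1) - t k ∧ ‖x (k + 1) - x 0‖ ≤ t (k + 1) ∧
        ‖G (x (k + 1))‖ ≤ a / 2 * t (k + 1) ^ 2 - t (k + 1) + η := by
    obtain ⟨E, hE, hsucc⟩ := hNewton k
    have hxD := hmem hxk (htR k)
    have hat : 0 < 1 - a * t k := by nlinarith [htR k]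
    have hΔ : ‖E.symm (G (x k))‖ ≤ t (k + 1) - t k :=
      calc ‖E.symm (G (x k))‖ ≤ ‖G (x k)‖ / (1 - a * ‖x k - x 0‖) :=
            norm_newton_step_le hLip (hmem (by simp) (ht0 ▸ htR 0)) hxD hG'0
              (by nlinarith [norm_nonneg (x k - x 0)]) E hE
        _ ≤ (a / 2 * t k ^ 2 - t k + η) / (1 - a * t k) := by
            gcongr
            exact (norm_nonneg _).trans hGk
        _ = t (k + 1) - t k := by rw [← ht k, mul_div_cancel_right₀ _ hat.ne']
    have hstep : ‖x (k + 1) - x k‖ = ‖E.symm (G (x k))‖ := by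
      rw [hsucc, sub_sub_cancel_left, norm_neg]
    have hball' : ‖x (k + 1) - x 0‖ ≤ t (k + 1) := by
      linarith [norm_sub_le_norm_sub_add_norm_sub (x (k + 1)) (x k) (x 0)]
    refine ⟨hstep ▸ hΔ, hball', ?_⟩
    calc ‖G (x (k + 1))‖ ≤ a / 2 * ‖E.symm (G (x k))‖ ^ 2 := by
          rw [hsucc]
          exact norm_image_newton_step_le hD hG hLip hxD E hE (hsucc ▸ hmem hball' (htR _))
      _ ≤ a / 2 * (t (k + 1) - t k) ^ 2 := by gcongr
      _ = a / 2 * t (k + 1) ^ 2 - t (k + 1) + η := by linear_combination ht k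
  have hinv (n : ℕ) :
      ‖x n - x 0‖ ≤ t n ∧ ‖G (x n)‖ ≤ a / 2 * t n ^ 2 - t n + η := by
    induction n with
    | zero => simpa [ht0] using hη
    | succ n ih => exact (step n ih.1 ih.2).2
  rw [dist_comm, dist_eq_norm]
  exact (step n (hinv n).1 (hinv n).2).1

end NewtonMajorant

theorem newton_dist_succ_le_of_majorant_of_equiv {X Y : Type*} [NormedAddCommGroup X]
    [NormedSpace ℝ X] [NormedAddCommGroup Y] [NormedSpace ℝ Y] {D : Set X} (hD : Convex ℝ D)
    {F : X → Y} {F' : X → X →L[ℝ] Y} (hF : ∀ z ∈ D, HasFDerivAt F (F' z) z) {K : ℝ}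
    (hK : 0 ≤ K) (hLip : ∀ u ∈ D, ∀ v ∈ D, ‖F' u - F' v‖ ≤ K * ‖u - v‖) {x : ℕ → X}
    (hNewton : ∀ n, ∃ e : X ≃L[ℝ] Y, (e : X →L[ℝ] Y) = F' (x n) ∧
      x (n + 1) = x n - e.symm (F (x n)))
    (A : X ≃L[ℝ] Y) (hA : (A : X →L[ℝ] Y) = F' (x 0)) {B η R : ℝ}
    (hB : ‖(A.symm : Y →L[ℝ] X)‖ ≤ B) (hη : ‖A.symm (F (x 0))‖ ≤ η) (hR : B * K * R < 1)
    (hball : closedBall (x 0) R ⊆ D) {t : ℕ → ℝ} (ht0 : t 0 = 0) (htR : ∀ n, t n ≤ R)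
    (ht : ∀ n, (t (n + 1) - t n) * (1 - B * K * t n) = B * K / 2 * t n ^ 2 - t n + η)
    (n : ℕ) : dist (x n) (x (n + 1)) ≤ t (n + 1) - t n := by
  set T : Y →L[ℝ] X := (A.symm : Y →L[ℝ] X)
  have hB₀ : 0 ≤ B := (norm_nonneg T).trans hB
  refine newton_dist_succ_le_of_majorant (G := fun z => T (F z)) (G' := fun z => T.comp (F' z))
    hD (fun z hz => T.hasFDerivAt.comp z (hF z hz)) (by positivity) (fun u hu v hv => ?_)
    (fun k => ?_) (by ext v; simp [T, ← hA]) hη hR hball ht0 htR ht n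
  · calc ‖T.comp (F' u) - T.comp (F' v)‖ ≤ ‖T‖ * ‖F' u - F' v‖ := T.norm_comp_sub_comp_le _ _
      _ ≤ B * (K * ‖u - v‖) := mul_le_mul hB (hLip u hu v hv) (norm_nonneg _) hB₀
      _ = B * K * ‖u - v‖ := (mul_assoc _ _ _).symm
  · obtain ⟨e, he, hsucc⟩ := hNewton k
    exact ⟨e.trans A.symm, by rw [← he]; rfl, by simpa [T] using hsucc⟩

noncomputable def kantorovichError (θ η : ℝ) (n : ℕ) : ℝ :=
  θ ^ (2 ^ n) * (1 - θ ^ 2) / (θ * (1 - θ ^ (2 ^ n))) * η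

/-- The Newton iterates from `0` of `a / 2 * τ ^ 2 - τ + η`, where `a * η = 2 * θ / (1 + θ) ^ 2`.
The roots of this quadratic are `t* = (1 + θ) * η` and `t* / θ`, and the Newton iterates satisfy
`(t n - t*) / (t n - t* / θ) = θ ^ 2 ^ n`, which gives `t* - t n = kantorovichError θ η n`. -/
noncomputable def kantorovichMajorant (θ η : ℝ) (n : ℕ) : ℝ :=
  (1 + θ) * η - kantorovichError θ η n

section KantorovichMajorant

variable {θ η : ℝ}

theorem kantorovichError_pos (hθ₀ : 0 < θ) (hθ₁ : θ < 1) (hη : 0 < η) (n : ℕ) :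
    0 < kantorovichError θ η n := by
  have hq : θ ^ 2 ^ n < 1 := pow_lt_one₀ hθ₀.le hθ₁ (by positivity)
  have hθ2 : θ ^ 2 < 1 := pow_lt_one₀ hθ₀.le hθ₁ two_ne_zero
  unfold kantorovichError
  apply mul_pos (div_pos _ _) hη <;> nlinarith [pow_pos hθ₀ (2 ^ n)]

theorem kantorovichMajorant_zero (hθ₀ : θ ≠ 0) (hθ₁ : θ ≠ 1) :
    kantorovichMajorant θ η 0 = 0 := by
  have : 1 - θ ≠ 0 := sub_ne_zero.2 hθ₁.symm
  simp only [kantorovichMajorant, kantorovichError, pow_zero, pow_one]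
  field_simp
  ring

theorem kantorovichMajorant_newton (hθ₀ : 0 < θ) (hθ₁ : θ < 1) {a : ℝ}
    (ha : a * η = 2 * θ / (1 + θ) ^ 2) (n : ℕ) :
    (kantorovichMajorant θ η (n + 1) - kantorovichMajorant θ η n) *
        (1 - a * kantorovichMajorant θ η n) =
      a / 2 * kantorovichMajorant θ η n ^ 2 - kantorovichMajorant θ η n + η := by
  have hq : θ ^ 2 ^ n < 1 := pow_lt_one₀ hθ₀.le hθ₁ (by positivity)
  have hq0 : 0 < θ ^ 2 ^ n := by positivity
  have h1 : 1 - θ ^ 2 ^ n ≠ 0 := by linarith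
  have h2 : 1 - (θ ^ 2 ^ n) ^ 2 ≠ 0 := by nlinarith
  rw [eq_div_iff (by positivity)] at ha
  have hη : η ≠ 0 := by rintro rfl; simp at ha; linarith
  obtain rfl : a = 2 * θ / ((1 + θ) ^ 2 * η) := by
    rw [eq_div_iff (by positivity)]; linear_combination ha
  unfold kantorovichMajorant kantorovichError
  rw [pow_succ, pow_mul]
  generalize θ ^ 2 ^ n = q at *
  field_simp
  ring

end KantorovichMajorant

theorem kantorovich_theta_spec {h θ : ℝ} (h₀ : 0 < h) (h₁ : h < 1 / 2)
    (hθ : θ = (1 - √(1 - 2 * h)) / (1 + √(1 - 2 * h))) :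
    0 < θ ∧ θ < 1 ∧ h = 2 * θ / (1 + θ) ^ 2 ∧ (1 - √(1 - 2 * h)) / h = 1 + θ := by
  set s := √(1 - 2 * h)
  have hs2 : s ^ 2 = 1 - 2 * h := Real.sq_sqrt (by linarith)
  have hs0 : 0 < s := Real.sqrt_pos.2 (by linarith)
  have hs1 : s < 1 := by nlinarith
  have hθ' : 1 + θ = 2 / (1 + s) := by rw [hθ]; field_simp; ring
  refine ⟨by rw [hθ]; exact div_pos (by linarith) (by linarith),
    by rw [hθ, div_lt_one (by linarith)]; linarith, ?_, ?_⟩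
  · rw [hθ', hθ]; field_simp; linear_combination hs2
  · rw [hθ', div_eq_div_iff h₀.ne' (by linarith)]; linear_combination -hs2

theorem kantorovich_convergence_rate_general
    (X Y : Type*) [NormedAddCommGroup X] [NormedSpace ℝ X]
    [NormedAddCommGroup Y] [NormedSpace ℝ Y]
    (D₀ : Set X) (hconv : Convex ℝ D₀)
    (F : X → Y) (F' : X → X →L[ℝ] Y)
    (hF : ∀ x ∈ D₀, HasFDerivAt F (F' x) x)
    (x₀ : X)
    (A : X ≃L[ℝ] Y) (hA : (A : X →L[ℝ] Y) = F' x₀)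
    (B η K : ℝ) (hB : 0 < B) (hη : 0 < η) (hK : 0 < K)
    (hBbound : ‖(A.symm : Y →L[ℝ] X)‖ ≤ B)
    (hηbound : ‖A.symm (F x₀)‖ ≤ η)
    (hLip : ∀ x ∈ D₀, ∀ y ∈ D₀, ‖F' x - F' y‖ ≤ K * ‖x - y‖)
    (h : ℝ) (hdef : h = B * K * η) (hhalf : h < 1 / 2)
    (tstar : ℝ) (htstar : tstar = (1 - Real.sqrt (1 - 2 * h)) / h * η)
    (hball : Metric.closedBall x₀ tstar ⊆ D₀)
    (θ : ℝ) (hθ : θ = (1 - Real.sqrt (1 - 2 * h)) / (1 + Real.sqrt (1 - 2 * h)))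
    (xs : ℕ → X) (hxs0 : xs 0 = x₀)
    (hNewton : ∀ k : ℕ, ∃ e : X ≃L[ℝ] Y, (e : X →L[ℝ] Y) = F' (xs k) ∧
      xs (k + 1) = xs k - e.symm (F (xs k)))
    (xstar : X)
    (hlim : Filter.Tendsto xs Filter.atTop (nhds xstar)) :
    ∀ k : ℕ, ‖xstar - xs (k + 1)‖ ≤
      θ ^ (2 ^ (k + 1)) * (1 - θ ^ 2) / (θ * (1 - θ ^ (2 ^ (k + 1)))) * η := by
  intro k
  subst hxs0
  obtain ⟨hθ₀, hθ₁, hhθ, hroot⟩ := kantorovich_theta_spec (by rw [hdef]; positivity) hhalf hθ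
  have ha : B * K * η = 2 * θ / (1 + θ) ^ 2 := hdef ▸ hhθ
  have hR : B * K * ((1 + θ) * η) < 1 := by
    rw [mul_comm (1 + θ), ← mul_assoc, ha, pow_two, ← div_div, div_mul_cancel₀ _ (by positivity),
      div_lt_one (by positivity)]
    linarith
  have htR (n : ℕ) : kantorovichMajorant θ η n ≤ (1 + θ) * η :=
    sub_le_self _ (kantorovichError_pos hθ₀ hθ₁ hη n).le
  have hstep := newton_dist_succ_le_of_majorant_of_equiv hconv hF hK.le hLip hNewton A hA
    hBbound hηbound hR (by rwa [htstar, hroot] at hball)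
    (kantorovichMajorant_zero hθ₀.ne' hθ₁.ne) htR (kantorovichMajorant_newton hθ₀ hθ₁ ha)
  have hdist := dist_le_of_tendsto_of_dist_succ_le hstep htR hlim (k + 1)
  rwa [kantorovichMajorant, sub_sub_cancel, dist_comm, dist_eq_norm] at hdist

/-- Kantorovich theorem, convergence rate: assuming additionally `h < 1/2`, with
`θ = (1 - √(1 - 2h))/(1 + √(1 - 2h))`, if `x*` is the zero of `F` in the closed ball of center
`x₀` and radius `t* = ((1 - √(1 - 2h))/h)·η` to which the Newton sequence
`x_{k+1} = x_k - F'(x_k)⁻¹ F(x_k)` converges, then for every `k ≥ 0`,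
`‖x* - x_{k+1}‖ ≤ (θ^{2^{k+1}} (1 - θ²)) / (θ (1 - θ^{2^{k+1}})) · η`. -/
theorem kantorovich_convergence_rate
    (X Y : Type*) [NormedAddCommGroup X] [NormedSpace ℝ X] [CompleteSpace X]
    [NormedAddCommGroup Y] [NormedSpace ℝ Y] [CompleteSpace Y]
    (D₀ : Set X) (hD₀ : IsOpen D₀) (hconv : Convex ℝ D₀)
    (F : X → Y) (F' : X → X →L[ℝ] Y)
    (hF : ∀ x ∈ D₀, HasFDerivAt F (F' x) x)
    (x₀ : X) (hx₀ : x₀ ∈ D₀)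
    (A : X ≃L[ℝ] Y) (hA : (A : X →L[ℝ] Y) = F' x₀)
    (B η K : ℝ) (hB : 0 < B) (hη : 0 < η) (hK : 0 < K)
    (hBbound : ‖(A.symm : Y →L[ℝ] X)‖ ≤ B)
    (hηbound : ‖A.symm (F x₀)‖ ≤ η)
    (hLip : ∀ x ∈ D₀, ∀ y ∈ D₀, ‖F' x - F' y‖ ≤ K * ‖x - y‖)
    (h : ℝ) (hdef : h = B * K * η) (hhalf : h < 1 / 2)
    (tstar : ℝ) (htstar : tstar = (1 - Real.sqrt (1 - 2 * h)) / h * η)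
    (hball : Metric.closedBall x₀ tstar ⊆ D₀)
    (θ : ℝ) (hθ : θ = (1 - Real.sqrt (1 - 2 * h)) / (1 + Real.sqrt (1 - 2 * h)))
    (xs : ℕ → X) (hxs0 : xs 0 = x₀)
    (hNewton : ∀ k : ℕ, ∃ e : X ≃L[ℝ] Y, (e : X →L[ℝ] Y) = F' (xs k) ∧
      xs (k + 1) = xs k - e.symm (F (xs k)))
    (xstar : X) (hxstar : xstar ∈ Metric.closedBall x₀ tstar) (hzero : F xstar = 0)
    (hlim : Filter.Tendsto xs Filter.atTop (nhds xstar)) :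
    ∀ k : ℕ, ‖xstar - xs (k + 1)‖ ≤
      θ ^ (2 ^ (k + 1)) * (1 - θ ^ 2) / (θ * (1 - θ ^ (2 ^ (k + 1)))) * η :=
  kantorovich_convergence_rate_general X Y D₀ hconv F F' hF x₀ A hA B η K hB hη hK hBbound hηbound
    hLip h hdef hhalf tstar htstar hball θ hθ xs hxs0 hNewton xstar hlim
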